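/- Let U ⊆ ℝ² be open and let ξ, φ : ℝ² → ℝ² be three times continuously differentiable on U, with ξ divergence-free on U (∂₁ξ¹ + ∂₂ξ² = 0 at every point of U). Then the curl of the twice-iterated SALT operator is the twice-iterated transport of the curl: for every x ∈ U, curl(B_ξ(B_ξφ))(x) = (L_ξ(L_ξ(curl φ)))(x). -/

import Mathlib

/-!
For `C²` fields, the product rule and the symmetry of second derivatives give
`curl (B_ξ ψ) = L_ξ (curl ψ) + (div ξ) (curl ψ)`: the second derivatives of `ξ` produced by
`T_ξ` cancel, and the remaining first-order terms of `L_ξ` and `T_ξ` combine into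
`(div ξ) (curl ψ)`. Hence `curl ∘ B_ξ = L_ξ ∘ curl` on `U` when `ξ` is divergence-free. Applying
this to `ψ = B_ξ φ`, which is still `C²`, and then to `ψ = φ` on a neighbourhood of `x` (so that
the derivatives taken by the outer `L_ξ` agree) proves the theorem.
-/
noncomputable section

/-- Partial derivative in the first coordinate of a scalar function on `ℝ²`. -/
def pd1 (f : ℝ × ℝ → ℝ) (x : ℝ × ℝ) : ℝ := fderiv ℝ f x (1, 0)

/-- Partial derivative in the second coordinate of a scalar function on `ℝ²`. -/
def pd2 (f : ℝ × ℝ → ℝ) (x : ℝ × ℝ) : ℝ := fderiv ℝ f x (0, 1)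

/-- The transport operator `(L_ξ φ)^l = ∑_j ξ^j ∂_j φ^l` on vector fields over `ℝ²`. -/
def Ltrans (ξ φ : ℝ × ℝ → ℝ × ℝ) (x : ℝ × ℝ) : ℝ × ℝ :=
  ((ξ x).1 * pd1 (fun y => (φ y).1) x + (ξ x).2 * pd2 (fun y => (φ y).1) x,
   (ξ x).1 * pd1 (fun y => (φ y).2) x + (ξ x).2 * pd2 (fun y => (φ y).2) x)

/-- The transport operator `L_ξ w = ∑_j ξ^j ∂_j w` on scalar functions over `ℝ²`. -/
def LtransScalar (ξ : ℝ × ℝ → ℝ × ℝ) (w : ℝ × ℝ → ℝ) (x : ℝ × ℝ) : ℝ :=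
  (ξ x).1 * pd1 w x + (ξ x).2 * pd2 w x

/-- The operator `(T_ξ φ)^l = ∑_j φ^j ∂_l ξ^j` on vector fields over `ℝ²`. -/
def Tsalt (ξ φ : ℝ × ℝ → ℝ × ℝ) (x : ℝ × ℝ) : ℝ × ℝ :=
  ((φ x).1 * pd1 (fun y => (ξ y).1) x + (φ x).2 * pd1 (fun y => (ξ y).2) x,
   (φ x).1 * pd2 (fun y => (ξ y).1) x + (φ x).2 * pd2 (fun y => (ξ y).2) x)

/-- The SALT operator `B_ξ φ = L_ξ φ + T_ξ φ`. -/
def SALT (ξ φ : ℝ × ℝ → ℝ × ℝ) (x : ℝ × ℝ) : ℝ × ℝ := Ltrans ξ φ x + Tsalt ξ φ x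

/-- `curl f = ∂₁ f² - ∂₂ f¹` on `ℝ²`. -/
def curl2 (f : ℝ × ℝ → ℝ × ℝ) (x : ℝ × ℝ) : ℝ :=
  pd1 (fun y => (f y).2) x - pd2 (fun y => (f y).1) x

/-- `div f = ∂₁ f¹ + ∂₂ f²` on `ℝ²`. -/
def div2 (f : ℝ × ℝ → ℝ × ℝ) (x : ℝ × ℝ) : ℝ :=
  pd1 (fun y => (f y).1) x + pd2 (fun y => (f y).2) x

open Topology

variable {f g : ℝ × ℝ → ℝ} {x : ℝ × ℝ}

lemma pd1_add (hf : DifferentiableAt ℝ f x) (hg : DifferentiableAt ℝ g x) :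
    pd1 (fun y => f y + g y) x = pd1 f x + pd1 g x := by
  simp [pd1, fderiv_fun_add hf hg]

lemma pd2_add (hf : DifferentiableAt ℝ f x) (hg : DifferentiableAt ℝ g x) :
    pd2 (fun y => f y + g y) x = pd2 f x + pd2 g x := by
  simp [pd2, fderiv_fun_add hf hg]

lemma pd1_sub (hf : DifferentiableAt ℝ f x) (hg : DifferentiableAt ℝ g x) :
    pd1 (fun y => f y - g y) x = pd1 f x - pd1 g x := by
  simp [pd1, fderiv_fun_sub hf hg]

lemma pd2_sub (hf : DifferentiableAt ℝ f x) (hg : DifferentiableAt ℝ g x) :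
    pd2 (fun y => f y - g y) x = pd2 f x - pd2 g x := by
  simp [pd2, fderiv_fun_sub hf hg]

lemma pd1_mul (hf : DifferentiableAt ℝ f x) (hg : DifferentiableAt ℝ g x) :
    pd1 (fun y => f y * g y) x = f x * pd1 g x + g x * pd1 f x := by
  simp [pd1, fderiv_fun_mul hf hg]

lemma pd2_mul (hf : DifferentiableAt ℝ f x) (hg : DifferentiableAt ℝ g x) :
    pd2 (fun y => f y * g y) x = f x * pd2 g x + g x * pd2 f x := by
  simp [pd2, fderiv_fun_mul hf hg]

lemma Filter.EventuallyEq.pd1_eq (h : f =ᶠ[𝓝 x] g) : pd1 f x = pd1 g x := by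
  simp only [pd1, h.fderiv_eq]

lemma Filter.EventuallyEq.pd2_eq (h : f =ᶠ[𝓝 x] g) : pd2 f x = pd2 g x := by
  simp only [pd2, h.fderiv_eq]

lemma contDiffAt_pd1 {n : ℕ} (hf : ContDiffAt ℝ (n + 1) f x) : ContDiffAt ℝ n (pd1 f) x :=
  (hf.fderiv_right le_rfl).clm_apply contDiffAt_const

lemma contDiffAt_pd2 {n : ℕ} (hf : ContDiffAt ℝ (n + 1) f x) : ContDiffAt ℝ n (pd2 f) x :=
  (hf.fderiv_right le_rfl).clm_apply contDiffAt_const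

lemma differentiableAt_pd1 (hf : ContDiffAt ℝ 2 f x) :
    DifferentiableAt ℝ (pd1 f) x :=
  (contDiffAt_pd1 (n := 1) hf).differentiableAt one_ne_zero

lemma differentiableAt_pd2 (hf : ContDiffAt ℝ 2 f x) :
    DifferentiableAt ℝ (pd2 f) x :=
  (contDiffAt_pd2 (n := 1) hf).differentiableAt one_ne_zero

lemma fderiv_fderiv_apply_comm (hf : ContDiffAt ℝ 2 f x) (v w : ℝ × ℝ) :
    fderiv ℝ (fun y => fderiv ℝ f y v) x w = fderiv ℝ (fun y => fderiv ℝ f y w) x v := by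
  have hd : DifferentiableAt ℝ (fderiv ℝ f) x :=
    (hf.fderiv_right (m := 1) le_rfl).differentiableAt one_ne_zero
  simp only [fderiv_clm_apply hd (differentiableAt_const _), fderiv_fun_const, Pi.zero_apply,
    ContinuousLinearMap.comp_zero, zero_add, ContinuousLinearMap.flip_apply]
  exact hf.isSymmSndFDerivAt (by simp [minSmoothness_of_isRCLikeNormedField]) w v

lemma pd1_pd2_comm (hf : ContDiffAt ℝ 2 f x) : pd1 (pd2 f) x = pd2 (pd1 f) x :=
  fderiv_fderiv_apply_comm hf _ _

lemma curl2_SALT {ξ ψ : ℝ × ℝ → ℝ × ℝ} (hξ : ContDiffAt ℝ 2 ξ x) (hψ : ContDiffAt ℝ 2 ψ x) :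
    curl2 (SALT ξ ψ) x = LtransScalar ξ (curl2 ψ) x + div2 ξ x * curl2 ψ x := by
  have ha := hξ.fst
  have hb := hξ.snd
  have hp := hψ.fst
  have hq := hψ.snd
  -- the first and second partials of the components, for the `fun_prop` discharger below
  have := ha.differentiableAt two_ne_zero
  have := hb.differentiableAt two_ne_zero
  have := hp.differentiableAt two_ne_zero
  have := hq.differentiableAt two_ne_zero
  have := differentiableAt_pd1 ha
  have := differentiableAt_pd2 ha
  have := differentiableAt_pd1 hb
  have := differentiableAt_pd2 hb
  have := differentiableAt_pd1 hp
  have := differentiableAt_pd2 hp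
  have := differentiableAt_pd1 hq
  have := differentiableAt_pd2 hq
  have hcurl : curl2 ψ = fun y => pd1 (fun z => (ψ z).2) y - pd2 (fun z => (ψ z).1) y := rfl
  simp (disch := fun_prop) only [curl2, div2, SALT, Ltrans, Tsalt, LtransScalar, hcurl,
    Prod.fst_add, Prod.snd_add, pd1_add, pd2_add, pd1_mul, pd2_mul, pd1_sub, pd2_sub]
  rw [pd1_pd2_comm ha, pd1_pd2_comm hb, pd1_pd2_comm hp, pd1_pd2_comm hq]
  ring

lemma curl2_SALT_of_div2_eq_zero {ξ ψ : ℝ × ℝ → ℝ × ℝ} (hξ : ContDiffAt ℝ 2 ξ x)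
    (hψ : ContDiffAt ℝ 2 ψ x) (hdiv : div2 ξ x = 0) :
    curl2 (SALT ξ ψ) x = LtransScalar ξ (curl2 ψ) x := by
  rw [curl2_SALT hξ hψ, hdiv, zero_mul, add_zero]

lemma contDiffAt_SALT {ξ ψ : ℝ × ℝ → ℝ × ℝ} {n : ℕ} (hξ : ContDiffAt ℝ (n + 1) ξ x)
    (hψ : ContDiffAt ℝ (n + 1) ψ x) : ContDiffAt ℝ n (SALT ξ ψ) x := by
  have hn : (n : WithTop ℕ∞) ≤ n + 1 := by exact_mod_cast n.le_succ
  have ha := hξ.fst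
  have hb := hξ.snd
  have hp := hψ.fst
  have hq := hψ.snd
  have := ha.of_le hn
  have := hb.of_le hn
  have := hp.of_le hn
  have := hq.of_le hn
  have := contDiffAt_pd1 ha
  have := contDiffAt_pd2 ha
  have := contDiffAt_pd1 hb
  have := contDiffAt_pd2 hb
  have := contDiffAt_pd1 hp
  have := contDiffAt_pd2 hp
  have := contDiffAt_pd1 hq
  have := contDiffAt_pd2 hq
  refine ContDiffAt.prodMk (f := fun y => (SALT ξ ψ y).1) (g := fun y => (SALT ξ ψ y).2) ?_ ?_ <;>
    simp only [SALT, Ltrans, Tsalt, Prod.fst_add, Prod.snd_add] <;> fun_prop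

lemma Filter.EventuallyEq.ltransScalar_eq {ξ : ℝ × ℝ → ℝ × ℝ} (h : f =ᶠ[𝓝 x] g) :
    LtransScalar ξ f x = LtransScalar ξ g x := by
  simp only [LtransScalar, h.pd1_eq, h.pd2_eq]

/-- For `ξ, φ` three times continuously differentiable on an open set `U ⊆ ℝ²` with `ξ`
divergence-free on `U`, the curl of the twice-iterated SALT operator is the twice-iterated
transport of the curl: `curl (B_ξ (B_ξ φ)) = L_ξ (L_ξ (curl φ))` on `U`. -/
theorem curl_SALT_sq_of_divFree (U : Set (ℝ × ℝ)) (hU : IsOpen U) (ξ φ : ℝ × ℝ → ℝ × ℝ)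
    (hξ : ContDiffOn ℝ 3 ξ U) (hφ : ContDiffOn ℝ 3 φ U)
    (hdiv : ∀ y ∈ U, div2 ξ y = 0) (x : ℝ × ℝ) (hx : x ∈ U) :
    curl2 (fun y => SALT ξ (fun z => SALT ξ φ z) y) x =
      LtransScalar ξ (fun y => LtransScalar ξ (fun z => curl2 φ z) y) x := by
  have hξ3 {y} (hy : y ∈ U) : ContDiffAt ℝ 3 ξ y := hξ.contDiffAt (hU.mem_nhds hy)
  have hφ3 {y} (hy : y ∈ U) : ContDiffAt ℝ 3 φ y := hφ.contDiffAt (hU.mem_nhds hy)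
  have hcurl : curl2 (SALT ξ φ) =ᶠ[𝓝 x] LtransScalar ξ (curl2 φ) := by
    filter_upwards [hU.mem_nhds hx] with y hy
    exact curl2_SALT_of_div2_eq_zero ((hξ3 hy).of_le (by norm_num))
      ((hφ3 hy).of_le (by norm_num)) (hdiv y hy)
  calc curl2 (SALT ξ (SALT ξ φ)) x = LtransScalar ξ (curl2 (SALT ξ φ)) x :=
        curl2_SALT_of_div2_eq_zero ((hξ3 hx).of_le (by norm_num))
          (contDiffAt_SALT (hξ3 hx) (hφ3 hx)) (hdiv x hx)
    _ = LtransScalar ξ (LtransScalar ξ (curl2 φ)) x := hcurl.ltransScalar_eq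

end
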